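/- In the model plane M²_κ, consider a triangle with vertices A, B, C where |AB| = c > 0, |AC| = b, |BC| = a, and the angle at A is β = ∠(A; B, C). Then as b → 0⁺, a = c - b·cos β + (1/2)·sin²β·(cs_κ(c)/sn_κ(c))·b² + O(b³). -/

import Mathlib

/-!
Write `a = c + u`. The addition formula `md (c + u) = md c + cs c * md u + sn c * sn u`, together
with `cs = 1 - κ * md`, turns the cosine law into
`cs c * (md u - md b) + sn c * (sn u + sn b * cos β) = 0`.
Since `sn t = t + O(t³)` and `md t = t² / 2 + O(t³)`, the candidate `u₀ = -b cos β + Q b²` with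
`sn c * Q = cs c * sin² β / 2` solves this equation up to `O(b³)`: the `b²` terms cancel by the
choice of `Q`. Near `c` the derivative `md' = sn` stays above `sn c / 2 > 0`, so `md` expands
distances there by at least that factor, and `a` lies within `O(b³)` of `c + u₀`.
-/

open Real Set

noncomputable def sn (κ t : ℝ) : ℝ :=
  if 0 < κ then Real.sin (Real.sqrt κ * t) / Real.sqrt κ
  else if κ = 0 then t
  else Real.sinh (Real.sqrt (-κ) * t) / Real.sqrt (-κ)

noncomputable def cs (κ t : ℝ) : ℝ :=
  if 0 < κ then Real.cos (Real.sqrt κ * t)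
  else if κ = 0 then 1
  else Real.cosh (Real.sqrt (-κ) * t)

noncomputable def md (κ t : ℝ) : ℝ :=
  if 0 < κ then (1 - Real.cos (Real.sqrt κ * t)) / κ
  else if κ = 0 then t ^ 2 / 2
  else (1 - Real.cosh (Real.sqrt (-κ) * t)) / κ

noncomputable def fmod (c κ : ℝ) : ℝ := cs κ c / sn κ c

open Asymptotics Filter Topology

lemma sin_sub_self_isBigO_cube : (fun x => sin x - x) =O[𝓝 0] (· ^ 3) := by
  refine .of_bound 1 ?_
  filter_upwards [Metric.closedBall_mem_nhds (0 : ℝ) one_pos] with x hx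
  have hx : |x| ≤ 1 := by simpa using hx
  have h5 : |x| ^ 5 ≤ |x| ^ 3 := pow_le_pow_of_le_one (abs_nonneg x) hx (by norm_num)
  have h := abs_sub_le (sin x) (x - x ^ 3 / 6) x
  rw [show x - x ^ 3 / 6 - x = -(x ^ 3 / 6) by ring, abs_neg, abs_div, abs_pow] at h
  rw [norm_eq_abs, norm_eq_abs, one_mul, abs_pow]
  linarith [sin_bound hx, pow_nonneg (abs_nonneg x) 3]

lemma cos_sub_taylor_isBigO_cube : (fun x => cos x - (1 - x ^ 2 / 2)) =O[𝓝 0] (· ^ 3) := by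
  refine .of_bound 1 ?_
  filter_upwards [Metric.closedBall_mem_nhds (0 : ℝ) one_pos] with x hx
  have hx : |x| ≤ 1 := by simpa using hx
  have h4 : |x| ^ 4 ≤ |x| ^ 3 := pow_le_pow_of_le_one (abs_nonneg x) hx (by norm_num)
  rw [norm_eq_abs, norm_eq_abs, one_mul, abs_pow]
  linarith [cos_bound hx, pow_nonneg (abs_nonneg x) 3]

lemma exp_sub_taylor_isBigO_cube : (fun x => exp x - (1 + x + x ^ 2 / 2)) =O[𝓝 0] (· ^ 3) := by
  simpa [Finset.sum_range_succ, add_assoc] using exp_sub_sum_range_isBigO_pow 3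

lemma exp_neg_sub_taylor_isBigO_cube :
    (fun x => exp (-x) - (1 - x + x ^ 2 / 2)) =O[𝓝 0] (· ^ 3) := by
  have h := exp_sub_taylor_isBigO_cube.comp_tendsto (continuous_neg.tendsto' (0 : ℝ) 0 neg_zero)
  simpa [Function.comp_def, Odd.neg_pow (by decide : Odd 3), ← sub_eq_add_neg] using h

lemma sinh_sub_self_isBigO_cube : (fun x => sinh x - x) =O[𝓝 0] (· ^ 3) := by
  have h := (exp_sub_taylor_isBigO_cube.sub exp_neg_sub_taylor_isBigO_cube).const_mul_left (1 / 2)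
  refine h.congr_left fun x => ?_
  rw [sinh_eq]; ring

lemma cosh_sub_taylor_isBigO_cube : (fun x => cosh x - (1 + x ^ 2 / 2)) =O[𝓝 0] (· ^ 3) := by
  have h := (exp_sub_taylor_isBigO_cube.add exp_neg_sub_taylor_isBigO_cube).const_mul_left (1 / 2)
  refine h.congr_left fun x => ?_
  rw [cosh_eq]; ring

lemma Asymptotics.IsBigO.comp_const_mul_cube {f : ℝ → ℝ} (hf : f =O[𝓝 0] (· ^ 3)) (s : ℝ) :
    (fun t => f (s * t)) =O[𝓝 0] (· ^ 3) := by
  have h := hf.comp_tendsto ((continuous_const_mul s).tendsto' 0 0 (mul_zero s))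
  refine h.trans ((isBigO_const_mul_self (s ^ 3) (· ^ 3) _).congr_left fun t => ?_)
  simp only [Function.comp_apply]; ring

section Explicit

variable {κ : ℝ} (t : ℝ)

lemma sn_of_pos (hκ : 0 < κ) : sn κ t = sin (√κ * t) / √κ := if_pos hκ

lemma cs_of_pos (hκ : 0 < κ) : cs κ t = cos (√κ * t) := if_pos hκ

lemma md_of_pos (hκ : 0 < κ) : md κ t = (1 - cos (√κ * t)) / √κ ^ 2 := by
  rw [sq_sqrt hκ.le]; exact if_pos hκ

lemma sn_of_neg (hκ : κ < 0) : sn κ t = sinh (√(-κ) * t) / √(-κ) := by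
  simp [sn, hκ.not_gt, hκ.ne]

lemma cs_of_neg (hκ : κ < 0) : cs κ t = cosh (√(-κ) * t) := by
  simp [cs, hκ.not_gt, hκ.ne]

lemma md_of_neg (hκ : κ < 0) : md κ t = (cosh (√(-κ) * t) - 1) / √(-κ) ^ 2 := by
  rw [sq_sqrt (neg_nonneg.mpr hκ.le), div_neg, ← neg_div, neg_sub]
  simp [md, hκ.not_gt, hκ.ne]

end Explicit

lemma sn_zero_left (t : ℝ) : sn 0 t = t := by simp [sn]

lemma cs_zero_left (t : ℝ) : cs 0 t = 1 := by simp [cs]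

lemma md_zero_left (t : ℝ) : md 0 t = t ^ 2 / 2 := by simp [md]

lemma sn_sub_self_isBigO_cube (κ : ℝ) : (fun t => sn κ t - t) =O[𝓝 0] (· ^ 3) := by
  rcases lt_trichotomy κ 0 with hκ | rfl | hκ
  · have hs : 0 < √(-κ) := sqrt_pos.mpr (neg_pos.mpr hκ)
    refine ((sinh_sub_self_isBigO_cube.comp_const_mul_cube √(-κ)).const_mul_left
      (√(-κ))⁻¹).congr_left fun t => ?_
    rw [sn_of_neg t hκ]
    field_simp
  · simpa [sn_zero_left] using isBigO_zero (· ^ 3 : ℝ → ℝ) (𝓝 0)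
  · have hs : 0 < √κ := sqrt_pos.mpr hκ
    refine ((sin_sub_self_isBigO_cube.comp_const_mul_cube √κ).const_mul_left
      (√κ)⁻¹).congr_left fun t => ?_
    rw [sn_of_pos t hκ]
    field_simp

lemma md_sub_sq_div_two_isBigO_cube (κ : ℝ) : (fun t => md κ t - t ^ 2 / 2) =O[𝓝 0] (· ^ 3) := by
  rcases lt_trichotomy κ 0 with hκ | rfl | hκ
  · have hs : 0 < √(-κ) := sqrt_pos.mpr (neg_pos.mpr hκ)
    refine ((cosh_sub_taylor_isBigO_cube.comp_const_mul_cube √(-κ)).const_mul_left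
      (√(-κ) ^ 2)⁻¹).congr_left fun t => ?_
    rw [md_of_neg t hκ]
    field_simp
    ring
  · simpa [md_zero_left] using isBigO_zero (· ^ 3 : ℝ → ℝ) (𝓝 0)
  · have hs : 0 < √κ := sqrt_pos.mpr hκ
    refine ((cos_sub_taylor_isBigO_cube.comp_const_mul_cube √κ).const_mul_left
      (-(√κ ^ 2)⁻¹)).congr_left fun t => ?_
    rw [md_of_pos t hκ]
    field_simp
    ring

lemma cs_eq_one_sub_mul_md (κ t : ℝ) : cs κ t = 1 - κ * md κ t := by
  unfold cs md
  split_ifs <;> field_simp <;> simp_all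

lemma md_add (κ x y : ℝ) : md κ (x + y) = md κ x + cs κ x * md κ y + sn κ x * sn κ y := by
  rcases lt_trichotomy κ 0 with hκ | rfl | hκ
  · simp only [md_of_neg _ hκ, cs_of_neg _ hκ, sn_of_neg _ hκ, mul_add, cosh_add]
    have hs : 0 < √(-κ) := sqrt_pos.mpr (neg_pos.mpr hκ)
    field_simp
    ring
  · simp only [md_zero_left, cs_zero_left, sn_zero_left]; ring
  · simp only [md_of_pos _ hκ, cs_of_pos _ hκ, sn_of_pos _ hκ, mul_add, cos_add]
    have hs : 0 < √κ := sqrt_pos.mpr hκ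
    field_simp
    ring

lemma hasDerivAt_md (κ t : ℝ) : HasDerivAt (md κ) (sn κ t) t := by
  rcases lt_trichotomy κ 0 with hκ | rfl | hκ
  · have hs : 0 < √(-κ) := sqrt_pos.mpr (neg_pos.mpr hκ)
    rw [show md κ = _ from funext fun x => md_of_neg x hκ, sn_of_neg t hκ]
    refine ((((hasDerivAt_id' t).const_mul _).cosh.sub_const 1).div_const _).congr_deriv ?_
    field_simp
  · rw [funext md_zero_left, sn_zero_left]
    simpa using (hasDerivAt_pow 2 t).div_const 2
  · have hs : 0 < √κ := sqrt_pos.mpr hκ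
    rw [show md κ = _ from funext fun x => md_of_pos x hκ, sn_of_pos t hκ]
    refine ((((hasDerivAt_id' t).const_mul _).cos.const_sub 1).div_const _).congr_deriv ?_
    field_simp

lemma continuous_sn (κ : ℝ) : Continuous (sn κ) := by
  unfold sn; split_ifs <;> fun_prop

lemma sn_pos {κ c : ℝ} (hc : 0 < c) (hcκ : 0 < κ → c < π / √κ) : 0 < sn κ c := by
  rcases lt_trichotomy κ 0 with hκ | rfl | hκ
  · have hs : 0 < √(-κ) := sqrt_pos.mpr (neg_pos.mpr hκ)
    rw [sn_of_neg c hκ]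
    exact div_pos (sinh_pos_iff.mpr (by positivity)) hs
  · rwa [sn_zero_left]
  · have hs : 0 < √κ := sqrt_pos.mpr hκ
    rw [sn_of_pos c hκ]
    exact div_pos (sin_pos_of_pos_of_lt_pi (by positivity) ((lt_div_iff₀' hs).mp (hcκ hκ))) hs

lemma Convex.mul_abs_sub_le_abs_sub_of_le_deriv {f f' : ℝ → ℝ} {D : Set ℝ} {m : ℝ}
    (hD : Convex ℝ D) (hf : ∀ x ∈ D, HasDerivAt f (f' x) x) (hm : ∀ x ∈ D, m ≤ f' x)
    {x y : ℝ} (hx : x ∈ D) (hy : y ∈ D) : m * |x - y| ≤ |f x - f y| := by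
  wlog hyx : y ≤ x generalizing x y
  · rw [abs_sub_comm x, abs_sub_comm (f x)]
    exact this hy hx (le_of_not_ge hyx)
  have hmono := hD.mul_sub_le_image_sub_of_le_deriv (f := f)
    (fun z hz => (hf z hz).continuousAt.continuousWithinAt)
    (fun z hz => (hf z (interior_subset hz)).differentiableAt.differentiableWithinAt)
    (fun z hz => (hf z (interior_subset hz)).deriv ▸ hm z (interior_subset hz)) y hy x hx hyx
  rw [abs_of_nonneg (sub_nonneg.mpr hyx)]
  exact hmono.trans (le_abs_self _)

lemma md_add_sub_cosine_law_isBigO_cube {κ c β Q : ℝ}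
    (hQ : sn κ c * Q = cs κ c * sin β ^ 2 / 2) :
    (fun b => md κ (c + (-b * cos β + Q * b ^ 2)) -
      (md κ c + cs κ c * md κ b - sn κ c * sn κ b * cos β)) =O[𝓝 0] (· ^ 3) := by
  set u : ℝ → ℝ := fun b => -b * cos β + Q * b ^ 2
  have hsq : (fun b : ℝ => b ^ 2) =O[𝓝 0] (· ^ 1) := (isLittleO_pow_pow one_lt_two).isBigO
  have hu : u =O[𝓝 0] (· ^ 1) := by
    refine ((isBigO_refl (· ^ 1) _).const_mul_left (-cos β)).add (hsq.const_mul_left Q)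
      |>.congr_left fun b => ?_
    simp only [u]; ring
  have hu_cube : (fun b => u b ^ 3) =O[𝓝 0] (· ^ 3) := by
    simpa [← pow_mul] using hu.pow 3
  have hu0 : Tendsto u (𝓝 0) (𝓝 0) := by
    have : Continuous u := by fun_prop
    simpa [u] using this.tendsto 0
  have hmd_u := ((md_sub_sq_div_two_isBigO_cube κ).comp_tendsto hu0).trans hu_cube
  have hsn_u := ((sn_sub_self_isBigO_cube κ).comp_tendsto hu0).trans hu_cube
  have hb4 : (fun b : ℝ => b ^ 4) =O[𝓝 0] (· ^ 3) := (isLittleO_pow_pow (by norm_num)).isBigO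
  have hsum := (((hmd_u.sub (md_sub_sq_div_two_isBigO_cube κ)).add
      ((hb4.const_mul_left (Q ^ 2 / 2)).sub ((isBigO_refl (· ^ 3) _).const_mul_left (Q * cos β))))
      |>.const_mul_left (cs κ c)).add
    ((hsn_u.add ((sn_sub_self_isBigO_cube κ).const_mul_left (cos β))).const_mul_left (sn κ c))
  refine hsum.congr_left fun b => ?_
  simp only [Function.comp_apply, md_add, u]
  linear_combination (-b ^ 2) * hQ - cs κ c * b ^ 2 / 2 * sin_sq_add_cos_sq β

/-- Second-order Taylor expansion of the side `a = |BC|` of a model triangle in `M²_κ`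
with `|AB| = c`, `|AC| = b` and angle `β` at `A`, as `b → 0⁺`:
`a = c - b·cos β + ½ sin²β · (cs_κ(c)/sn_κ(c)) · b² + O(b³)`.
Here `a` is determined by the κ-cosine law in `md` form and `|a - c| ≤ b`. -/
theorem stmt4 (κ c β : ℝ) (hc : 0 < c) (hcκ : 0 < κ → c < Real.pi / Real.sqrt κ) :
    ∃ C > (0:ℝ), ∃ δ > (0:ℝ), ∀ b a : ℝ, 0 < b → b < δ → 0 ≤ a → |a - c| ≤ b →
      md κ a = md κ b + md κ c - κ * md κ b * md κ c - sn κ b * sn κ c * Real.cos β →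
      |a - (c - b * Real.cos β +
        (1 / 2) * (Real.sin β) ^ 2 * fmod c κ * b ^ 2)| ≤ C * b ^ 3 := by
  set Q := 1 / 2 * sin β ^ 2 * fmod c κ with hQ_def
  have hsn : 0 < sn κ c := sn_pos hc hcκ
  have hQ : sn κ c * Q = cs κ c * sin β ^ 2 / 2 := by
    rw [hQ_def, fmod]; field_simp
  obtain ⟨K, hK, hexp⟩ := (md_add_sub_cosine_law_isBigO_cube hQ).exists_pos
  obtain ⟨ε, hε, hsn_ball⟩ := Metric.eventually_nhds_iff_ball.mp
    ((continuous_sn κ).continuousAt.eventually (lt_mem_nhds (half_lt_self hsn)))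
  have hY : ∀ᶠ b in 𝓝 0, c + (-b * cos β + Q * b ^ 2) ∈ Metric.ball c ε :=
    ((Continuous.tendsto' (by fun_prop) 0 c (by simp))).eventually (Metric.ball_mem_nhds c hε)
  obtain ⟨δ, hδ, hnear⟩ := Metric.eventually_nhds_iff_ball.mp (hexp.bound.and hY)
  refine ⟨2 * K / sn κ c, by positivity, min δ ε, by positivity,
    fun b a hb hbδ _ hac hlaw => ?_⟩
  obtain ⟨hfb, hYb⟩ := hnear b (by simpa [abs_of_pos hb] using hbδ.trans_le (min_le_left _ _))
  have ha : a ∈ Metric.ball c ε := by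
    rw [Metric.mem_ball, Real.dist_eq]; linarith [min_le_right δ ε]
  have hlaw' : md κ a = md κ c + cs κ c * md κ b - sn κ c * sn κ b * cos β := by
    rw [hlaw, cs_eq_one_sub_mul_md]; ring
  have hlower := (convex_ball c ε).mul_abs_sub_le_abs_sub_of_le_deriv
    (fun x _ => hasDerivAt_md κ x) (fun x hx => (hsn_ball x hx).le) hYb ha
  rw [hlaw', abs_sub_comm] at hlower
  rw [norm_eq_abs, norm_eq_abs, abs_of_pos (pow_pos hb 3)] at hfb
  rw [div_mul_eq_mul_div, le_div_iff₀ hsn,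
    show c - b * cos β + 1 / 2 * sin β ^ 2 * fmod c κ * b ^ 2 = c + (-b * cos β + Q * b ^ 2) by ring]
  linarith
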